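/- Let M be a countable structure with a (local) stationary independence relation and G = Aut(M). Let g_1, …, g_4 ∈ G move maximally and let Y_0, …, Y_4 be finite (nonempty) sets with g_i(Y_{i−1}) = Y_i for i = 1, …, 4, and assume Y_0 ⫫_{Y_1} Y_2 and Y_2 ⫫_{Y_3} Y_4. Let x̄_0 and x̄_4 be tuples such that g_4g_3g_2g_1 maps tp(x̄_0/Y_0) to tp(x̄_4/Y_4), i.e. tp(g_4g_3g_2g_1(x̄_0)/Y_4) = tp(x̄_4/Y_4). Then for i = 1, …, 4 there are a_i ∈ Fix(Y_{i−1} ∪ Y_i) such that g_4^{a_4} g_3^{a_3} g_2^{a_2} g_1^{a_1}(x̄_0) = x̄_4. -/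
import Mathlib


open FirstOrder Set

namespace TentZiegler

variable {L : FirstOrder.Language} {M : Type*} [L.Structure M]

/-- The automorphism group of a first-order structure, with `(f * g) x = f (g x)`. -/
instance autGroup : Group (M ≃[L] M) where
  mul f g := f.comp g
  one := FirstOrder.Language.Equiv.refl L M
  inv := FirstOrder.Language.Equiv.symm
  mul_assoc _ _ _ := rfl
  one_mul _ := rfl
  mul_one _ := rfl
  inv_mul_cancel f := FirstOrder.Language.Equiv.ext fun x =>
    (f.symm_apply_apply x).trans (FirstOrder.Language.Equiv.refl_apply x).symm

@[simp] lemma aut_mul_apply (f g : M ≃[L] M) (x : M) : (f * g) x = f (g x) := rfl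

@[simp] lemma aut_inv_apply (f : M ≃[L] M) (x : M) : f⁻¹ x = f.symm x := rfl

/-- Tuples `x` and `y` realise the same type over `B`: some automorphism fixing `B`
pointwise maps `x` to `y`. -/
def SameTypeOver (L : FirstOrder.Language) {M : Type*} [L.Structure M]
    (B : Set M) {n : ℕ} (x y : Fin n → M) : Prop :=
  ∃ g : M ≃[L] M, (∀ b ∈ B, g b = b) ∧ ∀ i, g (x i) = y i

/-- `indep` is a stationary independence relation on `M` (between finite subsets). -/
structure IsSIR (L : FirstOrder.Language) (M : Type*) [L.Structure M]
    (indep : Set M → Set M → Set M → Prop) : Prop where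
  invariance : ∀ (g : M ≃[L] M) {A B C : Set M}, A.Finite → B.Finite → C.Finite →
    indep A B C → indep (g '' A) (g '' B) (g '' C)
  monotonicity₁ : ∀ {A B C D : Set M}, A.Finite → B.Finite → C.Finite → D.Finite →
    indep A B (C ∪ D) → indep A B C
  monotonicity₂ : ∀ {A B C D : Set M}, A.Finite → B.Finite → C.Finite → D.Finite →
    indep A B (C ∪ D) → indep A (B ∪ C) D
  transitivity : ∀ {A B C D : Set M}, A.Finite → B.Finite → C.Finite → D.Finite →
    indep A B C → indep A (B ∪ C) D → indep A B D
  symmetry : ∀ {A B C : Set M}, A.Finite → B.Finite → C.Finite →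
    indep A B C → indep C B A
  existence : ∀ {n : ℕ} (a : Fin n → M) {B C : Set M}, B.Finite → C.Finite →
    ∃ a' : Fin n → M, SameTypeOver L B a a' ∧ indep (Set.range a') B C
  stationarity : ∀ {n : ℕ} {a a' : Fin n → M} {B C : Set M}, B.Finite → C.Finite →
    SameTypeOver L B a a' → indep (Set.range a) B C → indep (Set.range a') B C →
    SameTypeOver L (B ∪ C) a a'

/-- `indep` is a local stationary independence relation on `M`: the axioms are only
required over nonempty base sets. -/
structure IsLocalSIR (L : FirstOrder.Language) (M : Type*) [L.Structure M]
    (indep : Set M → Set M → Set M → Prop) : Prop where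
  invariance : ∀ (g : M ≃[L] M) {A B C : Set M}, A.Finite → B.Finite → C.Finite →
    B.Nonempty → indep A B C → indep (g '' A) (g '' B) (g '' C)
  monotonicity₁ : ∀ {A B C D : Set M}, A.Finite → B.Finite → C.Finite → D.Finite →
    B.Nonempty → indep A B (C ∪ D) → indep A B C
  monotonicity₂ : ∀ {A B C D : Set M}, A.Finite → B.Finite → C.Finite → D.Finite →
    B.Nonempty → indep A B (C ∪ D) → indep A (B ∪ C) D
  transitivity : ∀ {A B C D : Set M}, A.Finite → B.Finite → C.Finite → D.Finite →
    B.Nonempty → indep A B C → indep A (B ∪ C) D → indep A B D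
  symmetry : ∀ {A B C : Set M}, A.Finite → B.Finite → C.Finite →
    B.Nonempty → indep A B C → indep C B A
  existence : ∀ {n : ℕ} (a : Fin n → M) {B C : Set M}, B.Finite → C.Finite →
    B.Nonempty → ∃ a' : Fin n → M, SameTypeOver L B a a' ∧ indep (Set.range a') B C
  stationarity : ∀ {n : ℕ} {a a' : Fin n → M} {B C : Set M}, B.Finite → C.Finite →
    B.Nonempty → SameTypeOver L B a a' → indep (Set.range a) B C →
    indep (Set.range a') B C → SameTypeOver L (B ∪ C) a a'

/-- The tuple `x` is independent from the tuple `y` over `A; B`. -/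
def IndepOver {M : Type*} (indep : Set M → Set M → Set M → Prop) {n m : ℕ}
    (x : Fin n → M) (y : Fin m → M) (A B : Set M) : Prop :=
  indep (Set.range x) A (B ∪ Set.range y) ∧ indep (Set.range x ∪ A) B (Set.range y)

/-- `g` moves maximally: for every finite set `X` and every type over `X`, some
realisation `x` of the type is independent from `g(x)` over `X; g(X)`. -/
def MovesMaximally (L : FirstOrder.Language) {M : Type*} [L.Structure M]
    (indep : Set M → Set M → Set M → Prop) (g : M ≃[L] M) : Prop :=
  ∀ (X : Set M), X.Finite → ∀ {n : ℕ} (a : Fin n → M),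
    ∃ a' : Fin n → M, SameTypeOver L X a a' ∧
      IndepOver indep a' (fun i => g (a' i)) X (g '' X)

/-- `g` moves maximally (local version: only nonempty finite base sets `X`). -/
def MovesMaximallyLoc (L : FirstOrder.Language) {M : Type*} [L.Structure M]
    (indep : Set M → Set M → Set M → Prop) (g : M ≃[L] M) : Prop :=
  ∀ (X : Set M), X.Finite → X.Nonempty → ∀ {n : ℕ} (a : Fin n → M),
    ∃ a' : Fin n → M, SameTypeOver L X a a' ∧
      IndepOver indep a' (fun i => g (a' i)) X (g '' X)

/-- The topology of pointwise convergence on the automorphism group (`M` discrete). -/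
def autTopology (L : FirstOrder.Language) (M : Type*) [L.Structure M] :
    TopologicalSpace (M ≃[L] M) :=
  letI : TopologicalSpace M := ⊥
  TopologicalSpace.induced (fun (g : M ≃[L] M) (x : M) => g x) inferInstance

/-- The topology of pointwise convergence, as an instance. -/
instance autTopologyInst : TopologicalSpace (M ≃[L] M) := autTopology L M

end TentZiegler


namespace TentZiegler

section Helpers

variable {L : FirstOrder.Language} {M : Type*} [L.Structure M]

lemma SameTypeOver.symm' {B : Set M} {n : ℕ} {x y : Fin n → M}
    (h : SameTypeOver L B x y) : SameTypeOver L B y x := by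
  obtain ⟨e, hB, hxy⟩ := h
  refine ⟨e⁻¹, fun b hb => ?_, fun i => ?_⟩
  · conv_lhs => rw [← hB b hb]
    exact e.symm_apply_apply b
  · rw [← hxy i]
    exact e.symm_apply_apply _

lemma SameTypeOver.trans' {B : Set M} {n : ℕ} {x y z : Fin n → M}
    (h₁ : SameTypeOver L B x y) (h₂ : SameTypeOver L B y z) : SameTypeOver L B x z := by
  obtain ⟨e₁, hB₁, hx₁⟩ := h₁
  obtain ⟨e₂, hB₂, hx₂⟩ := h₂
  exact ⟨e₂ * e₁, fun b hb => by rw [aut_mul_apply, hB₁ b hb, hB₂ b hb],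
    fun i => by rw [aut_mul_apply, hx₁ i, hx₂ i]⟩

lemma SameTypeOver.conj {B : Set M} {n : ℕ} {x y : Fin n → M}
    (h : SameTypeOver L B x y) (f : M ≃[L] M) :
    SameTypeOver L (f '' B) (fun i => f (x i)) (fun i => f (y i)) := by
  obtain ⟨e, hB, hxy⟩ := h
  refine ⟨f * e * f⁻¹, ?_, fun i => ?_⟩
  · rintro b ⟨b₀, hb₀, rfl⟩
    show f (e (f⁻¹ (f b₀))) = f b₀
    rw [show f⁻¹ (f b₀) = b₀ from f.symm_apply_apply b₀, hB b₀ hb₀]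
  · show f (e (f⁻¹ (f (x i)))) = f (y i)
    rw [show f⁻¹ (f (x i)) = x i from f.symm_apply_apply _, hxy i]

lemma image_of_fix {e : M ≃[L] M} {Y : Set M} (h : ∀ y ∈ Y, e y = y) : e '' Y = Y := by
  ext m
  constructor
  · rintro ⟨y, hy, rfl⟩
    rw [h y hy]; exact hy
  · intro hm
    exact ⟨m, hm, h m hm⟩

lemma fix_inv {e : M ≃[L] M} {Y : Set M} (h : ∀ y ∈ Y, e y = y) : ∀ y ∈ Y, e.symm y = y := by
  intro y hy
  conv_lhs => rw [← h y hy]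
  exact e.symm_apply_apply y

lemma image_range' (e : M ≃[L] M) {n : ℕ} (x : Fin n → M) :
    e '' Set.range x = Set.range (fun i => e (x i)) := by
  rw [← Set.range_comp]; rfl

lemma symm_image_image (f : M ≃[L] M) (s : Set M) : f.symm '' (f '' s) = s := by
  ext m
  constructor
  · rintro ⟨p, ⟨q, hq, rfl⟩, rfl⟩
    rwa [f.symm_apply_apply]
  · intro hm
    exact ⟨f m, ⟨m, hm, rfl⟩, f.symm_apply_apply m⟩

lemma image_symm_image (f : M ≃[L] M) (s : Set M) : f '' (f.symm '' s) = s := by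
  ext m
  constructor
  · rintro ⟨p, ⟨q, hq, rfl⟩, rfl⟩
    rwa [f.apply_symm_apply]
  · intro hm
    exact ⟨f.symm m, ⟨m, hm, rfl⟩, f.apply_symm_apply m⟩

lemma range_split {n k : ℕ} {α : Type*} (f : Fin (n + k) → α) :
    Set.range f = Set.range (fun j : Fin n => f (Fin.castAdd k j)) ∪
      Set.range (fun i : Fin k => f (Fin.natAdd n i)) := by
  ext m
  constructor
  · rintro ⟨j, rfl⟩
    refine Fin.addCases (fun p => ?_) (fun p => ?_) j
    · exact Or.inl ⟨p, rfl⟩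
    · exact Or.inr ⟨p, rfl⟩
  · rintro (⟨p, rfl⟩ | ⟨p, rfl⟩) <;> exact ⟨_, rfl⟩

variable {indep : Set M → Set M → Set M → Prop}

lemma indep_conj (hI : IsLocalSIR L M indep) (f : M ≃[L] M) {A B C A' B' C' : Set M}
    (hA : A.Finite) (hB : B.Finite) (hC : C.Finite) (hBne : B.Nonempty)
    (hA' : f '' A = A') (hB' : f '' B = B') (hC' : f '' C = C')
    (h : indep A B C) : indep A' B' C' := by
  subst hA' hB' hC'
  exact hI.invariance f hA hB hC hBne h

lemma indep_mono_right (hI : IsLocalSIR L M indep) {A B C D : Set M}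
    (hA : A.Finite) (hB : B.Finite) (hC : C.Finite) (hD : D.Finite) (hBne : B.Nonempty)
    (hsub : C ⊆ D) (h : indep A B D) : indep A B C :=
  hI.monotonicity₁ hA hB hC hD hBne (by rwa [Set.union_eq_self_of_subset_left hsub])

lemma indep_mono_left (hI : IsLocalSIR L M indep) {A B C D : Set M}
    (hA : A.Finite) (hB : B.Finite) (hC : C.Finite) (hD : D.Finite) (hBne : B.Nonempty)
    (hsub : A ⊆ D) (h : indep D B C) : indep A B C :=
  hI.symmetry hC hB hA hBne
    (indep_mono_right hI hC hB hA hD hBne hsub (hI.symmetry hD hB hC hBne h))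

/-- Step 1: conjugating `g` by a suitable `a ∈ Fix(Y₀ ∪ Y₁)` moves `x₀` to a tuple `x₁`
realising `g(tp(x₀/Y₀))` over `Y₁` which is independent from `Y₂` over `Y₁`. -/
lemma step_one (hI : IsLocalSIR L M indep) {g : M ≃[L] M}
    (hgm : MovesMaximallyLoc L indep g)
    {Y₀ Y₁ Y₂ : Set M} (h0 : Y₀.Finite) (h1 : Y₁.Finite) (h2 : Y₂.Finite)
    (hne0 : Y₀.Nonempty) (hne1 : Y₁.Nonempty)
    (hm0 : g '' Y₀ = Y₁)
    (hyp : indep Y₀ Y₁ Y₂) {n : ℕ} (x₀ : Fin n → M) :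
    ∃ (a : M ≃[L] M) (x₁ : Fin n → M),
      (∀ y ∈ Y₀ ∪ Y₁, a y = y) ∧
      (∀ j, (a⁻¹ * g * a) (x₀ j) = x₁ j) ∧
      SameTypeOver L Y₁ (fun j => g (x₀ j)) x₁ ∧
      indep (Set.range x₁) Y₁ Y₂ := by
  obtain ⟨k, z, -, hz⟩ := h2.fin_param
  obtain ⟨w', ⟨e, hefix, hew⟩, hi1, -⟩ :=
    hgm (Y₀ ∪ Y₁) (h0.union h1) hne0.inl (Fin.append x₀ z)
  set w : Fin n → M := fun j => w' (Fin.castAdd k j) with hwdef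
  set wz : Fin k → M := fun i => w' (Fin.natAdd n i) with hwzdef
  have hex : ∀ j, e (x₀ j) = w j := fun j => by
    have := hew (Fin.castAdd k j); rwa [Fin.append_left] at this
  have hez : ∀ i, e (z i) = wz i := fun i => by
    have := hew (Fin.natAdd n i); rwa [Fin.append_right] at this
  have hrw' : Set.range w' = Set.range w ∪ Set.range wz := range_split w'
  have hrgw' : Set.range (fun i => g (w' i)) =
      Set.range (fun j => g (w j)) ∪ Set.range (fun i => g (wz i)) := range_split _
  rw [hrw', hrgw'] at hi1
  -- finiteness abbreviations
  have fw : (Set.range w).Finite := Set.finite_range _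
  have fwz : (Set.range wz).Finite := Set.finite_range _
  have fgw : (Set.range fun j => g (w j)).Finite := Set.finite_range _
  have fgwz : (Set.range fun i => g (wz i)).Finite := Set.finite_range _
  -- (g ∘ w) is independent from wz over Y₀ ∪ Y₁
  have d1 : indep (Set.range w ∪ Set.range wz) (Y₀ ∪ Y₁) (Set.range fun j => g (w j)) :=
    indep_mono_right hI (fw.union fwz) (h0.union h1) fgw
      (((h0.union h1).image _).union (fgw.union fgwz)) hne0.inl
      (Set.subset_union_of_subset_right Set.subset_union_left _) hi1
  have d2 : indep (Set.range fun j => g (w j)) (Y₀ ∪ Y₁) (Set.range wz) :=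
    indep_mono_right hI fgw (h0.union h1) fwz (fw.union fwz) hne0.inl
      Set.subset_union_right
      (hI.symmetry (fw.union fwz) (h0.union h1) fgw hne0.inl d1)
  have d3 : indep (Set.range wz) (Y₀ ∪ Y₁) (Set.range fun j => g (w j)) :=
    hI.symmetry fgw (h0.union h1) fwz hne0.inl d2
  rw [Set.union_comm Y₀ Y₁] at d3
  -- hypothesis transported by e
  have he0 : e '' Y₀ = Y₀ := image_of_fix fun y hy => hefix y (Or.inl hy)
  have he1 : e '' Y₁ = Y₁ := image_of_fix fun y hy => hefix y (Or.inr hy)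
  have he2 : e '' Y₂ = Set.range wz := by
    rw [← hz, image_range']
    exact congrArg _ (funext hez)
  have hyp' : indep Y₀ Y₁ (Set.range wz) := indep_conj hI e h0 h1 h2 hne1 he0 he1 he2 hyp
  have hyp'' : indep (Set.range wz) Y₁ Y₀ := hI.symmetry h0 h1 fwz hne1 hyp'
  -- transitivity
  have d4 : indep (Set.range wz) Y₁ (Set.range fun j => g (w j)) :=
    hI.transitivity fwz h1 h0 fgw hne1 hyp'' d3
  have d5 : indep (Set.range fun j => g (w j)) Y₁ (Set.range wz) :=
    hI.symmetry fwz h1 fgw hne1 d4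
  -- pull back by e⁻¹
  refine ⟨e, fun j => e.symm (g (w j)), hefix, ?_, ?_, ?_⟩
  · intro j
    show e.symm (g (e (x₀ j))) = e.symm (g (w j))
    rw [hex j]
  · refine ⟨e⁻¹ * (g * e * g⁻¹), fun y hy => ?_, fun j => ?_⟩
    · obtain ⟨y₀, hy₀, rfl⟩ : y ∈ g '' Y₀ := by rw [hm0]; exact hy
      show e.symm (g (e (g.symm (g y₀)))) = g y₀
      rw [show g.symm (g y₀) = y₀ from g.symm_apply_apply y₀, hefix y₀ (Or.inl hy₀)]
      conv_lhs => rw [← hefix (g y₀) (Or.inr (by rw [← hm0]; exact ⟨y₀, hy₀, rfl⟩))]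
      exact e.symm_apply_apply _
    · show e.symm (g (e (g.symm (g (x₀ j))))) = e.symm (g (w j))
      rw [show g.symm (g (x₀ j)) = x₀ j from g.symm_apply_apply _, hex j]
  · refine indep_conj hI e⁻¹ fgw h1 fwz hne1 ?_ ?_ ?_ d5
    · exact image_range' _ _
    · exact image_of_fix (fix_inv fun y hy => hefix y (Or.inr hy))
    · rw [image_range', ← hz]
      refine congrArg _ (funext fun i => ?_)
      show e.symm (wz i) = z i
      rw [← hez i]
      exact e.symm_apply_apply _

/-- Step 4: there is `a ∈ Fix(Y₃ ∪ Y₄)` such that `x₃ := (a⁻¹g a)⁻¹(x₄)` realises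
`g⁻¹(tp(x₄/Y₄))` over `Y₃` and is independent from `Y₂` over `Y₃`. -/
lemma step_four (hI : IsLocalSIR L M indep) {g : M ≃[L] M}
    (hgm : MovesMaximallyLoc L indep g)
    {Y₂ Y₃ Y₄ : Set M} (h2 : Y₂.Finite) (h3 : Y₃.Finite) (h4 : Y₄.Finite)
    (hne3 : Y₃.Nonempty)
    (hm : g '' Y₃ = Y₄) (hyp : indep Y₂ Y₃ Y₄) {n : ℕ} (x₄ : Fin n → M) :
    ∃ (a : M ≃[L] M) (x₃ : Fin n → M),
      (∀ y ∈ Y₃ ∪ Y₄, a y = y) ∧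
      (∀ j, (a⁻¹ * g * a) (x₃ j) = x₄ j) ∧
      SameTypeOver L Y₃ (fun j => g.symm (x₄ j)) x₃ ∧
      indep (Set.range x₃) Y₃ Y₂ := by
  obtain ⟨k, z, -, hz⟩ := h2.fin_param
  have hP : (g.symm '' Y₃).Finite := h3.image _
  obtain ⟨w', ⟨e, hefix, hew⟩, -, hi2⟩ :=
    hgm (Y₃ ∪ g.symm '' Y₃) (h3.union hP) hne3.inl
      (Fin.append (fun j => g.symm (x₄ j)) (fun i => g.symm (z i)))
  have hgX : g '' (Y₃ ∪ g.symm '' Y₃) = Y₄ ∪ Y₃ := by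
    rw [Set.image_union, hm, image_symm_image]
  rw [hgX, Set.union_comm Y₄ Y₃] at hi2
  set w : Fin n → M := fun j => w' (Fin.castAdd k j) with hwdef
  set wz : Fin k → M := fun i => w' (Fin.natAdd n i) with hwzdef
  have hex : ∀ j, e (g.symm (x₄ j)) = w j := fun j => by
    have := hew (Fin.castAdd k j); rwa [Fin.append_left] at this
  have hez : ∀ i, e (g.symm (z i)) = wz i := fun i => by
    have := hew (Fin.natAdd n i); rwa [Fin.append_right] at this
  have hrw' : Set.range w' = Set.range w ∪ Set.range wz := range_split w'
  have hrgw' : Set.range (fun i => g (w' i)) =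
      Set.range (fun j => g (w j)) ∪ Set.range (fun i => g (wz i)) := range_split _
  rw [hrw', hrgw'] at hi2
  have fw : (Set.range w).Finite := Set.finite_range _
  have fwz : (Set.range wz).Finite := Set.finite_range _
  have fgw : (Set.range fun j => g (w j)).Finite := Set.finite_range _
  have fgwz : (Set.range fun i => g (wz i)).Finite := Set.finite_range _
  have hne34 : (Y₃ ∪ Y₄).Nonempty := hne3.inl
  -- the automorphism a
  set a : M ≃[L] M := g * e * g⁻¹ with hadef
  have haap : ∀ m, a m = g (e (g.symm m)) := fun _ => rfl
  have hafix : ∀ y ∈ Y₃ ∪ Y₄, a y = y := by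
    rintro y (hy | hy)
    · have hmem : g.symm y ∈ g.symm '' Y₃ := ⟨y, hy, rfl⟩
      rw [haap, hefix _ (Or.inr hmem)]
      exact g.apply_symm_apply y
    · obtain ⟨y₃, hy₃, rfl⟩ : y ∈ g '' Y₃ := by rw [hm]; exact hy
      rw [haap, show g.symm (g y₃) = y₃ from g.symm_apply_apply _, hefix _ (Or.inl hy₃)]
  -- extraction from hi2
  have d1 : indep ((Set.range w ∪ Set.range wz) ∪ (Y₃ ∪ g.symm '' Y₃)) (Y₃ ∪ Y₄)
      (Set.range fun i => g (wz i)) :=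
    indep_mono_right hI ((fw.union fwz).union (h3.union hP)) (h3.union h4) fgwz
      (fgw.union fgwz) hne34 Set.subset_union_right hi2
  have d2 : indep (Set.range fun i => g (wz i)) (Y₃ ∪ Y₄)
      ((Set.range w ∪ Set.range wz) ∪ (Y₃ ∪ g.symm '' Y₃)) :=
    hI.symmetry ((fw.union fwz).union (h3.union hP)) (h3.union h4) fgwz hne34 d1
  have d3 : indep (Set.range fun i => g (wz i)) (Y₃ ∪ Y₄) (Set.range w) :=
    indep_mono_right hI fgwz (h3.union h4) fw
      ((fw.union fwz).union (h3.union hP)) hne34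
      (Set.subset_union_of_subset_left Set.subset_union_left _) d2
  -- hypothesis transported by a
  have ha2 : a '' Y₂ = Set.range fun i => g (wz i) := by
    rw [← hz, image_range']
    refine congrArg _ (funext fun i => ?_)
    rw [haap, hez i]
  have ha3 : a '' Y₃ = Y₃ := image_of_fix fun y hy => hafix y (Or.inl hy)
  have ha4 : a '' Y₄ = Y₄ := image_of_fix fun y hy => hafix y (Or.inr hy)
  have hyp' : indep (Set.range fun i => g (wz i)) Y₃ Y₄ :=
    indep_conj hI a h2 h3 h4 hne3 ha2 ha3 ha4 hyp
  -- transitivity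
  have d4 : indep (Set.range fun i => g (wz i)) Y₃ (Set.range w) :=
    hI.transitivity fgwz h3 h4 fw hne3 hyp' d3
  have d5 : indep (Set.range w) Y₃ (Set.range fun i => g (wz i)) :=
    hI.symmetry fgwz h3 fw hne3 d4
  -- conclusion
  refine ⟨a, fun j => a.symm (w j), hafix, ?_, ?_, ?_⟩
  · intro j
    show a.symm (g (a (a.symm (w j)))) = x₄ j
    rw [show a (a.symm (w j)) = w j from a.apply_symm_apply _, ← hex j]
    show a.symm (a (x₄ j)) = x₄ j
    exact a.symm_apply_apply _
  · refine ⟨a⁻¹ * e, fun y hy => ?_, fun j => ?_⟩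
    · show a.symm (e y) = y
      rw [hefix y (Or.inl hy)]
      exact fix_inv hafix y (Or.inl hy)
    · show a.symm (e (g.symm (x₄ j))) = a.symm (w j)
      rw [hex j]
  · refine indep_conj hI a⁻¹ fw h3 fgwz hne3 ?_ ?_ ?_ d5
    · exact image_range' _ _
    · exact image_of_fix (fix_inv fun y hy => hafix y (Or.inl hy))
    · rw [image_range', ← hz]
      refine congrArg _ (funext fun i => ?_)
      show a.symm (g (wz i)) = z i
      have hzi : a (z i) = g (wz i) := by rw [haap, hez i]
      rw [← hzi]
      exact a.symm_apply_apply _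

/-- Generic middle step: if `u ⫫_Y Y'`, `v ⫫_{Y'} (Y ∪ u)` and `tp(v/Y') = g(tp(u/Y))`,
some conjugate of `g` by an element of `Fix(Y ∪ Y')` maps `u` to `v`. -/
lemma step_mid (hI : IsLocalSIR L M indep) {g : M ≃[L] M}
    (hgm : MovesMaximallyLoc L indep g) {Y Y' : Set M}
    (hY : Y.Finite) (hY' : Y'.Finite) (hYne : Y.Nonempty) (hY'ne : Y'.Nonempty)
    (hm : g '' Y = Y') {n : ℕ} {u v : Fin n → M}
    (hu : indep (Set.range u) Y Y')
    (hv : indep (Set.range v) Y' (Y ∪ Set.range u))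
    (htp : SameTypeOver L Y' (fun j => g (u j)) v) :
    ∃ a : M ≃[L] M, (∀ y ∈ Y ∪ Y', a y = y) ∧ ∀ j, (a⁻¹ * g * a) (u j) = v j := by
  obtain ⟨w, ⟨d, hdfix, hdw⟩, hi1, hi2⟩ := hgm Y hY hYne u
  rw [hm] at hi1 hi2
  have fu : (Set.range u).Finite := Set.finite_range _
  have fv : (Set.range v).Finite := Set.finite_range _
  have fw : (Set.range w).Finite := Set.finite_range _
  have fgw : (Set.range fun j => g (w j)).Finite := Set.finite_range _
  have hwY' : indep (Set.range w) Y Y' :=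
    indep_mono_right hI fw hY hY' (hY'.union fgw) hYne Set.subset_union_left hi1
  obtain ⟨b, hbfix, hbu⟩ := hI.stationarity hY hY' hYne ⟨d, hdfix, hdw⟩ hu hwY'
  have htp2 : SameTypeOver L Y' (fun j => b (v j)) (fun j => g (w j)) := by
    have h₁ : SameTypeOver L Y' v (fun j => b (v j)) :=
      ⟨b, fun y hy => hbfix y (Or.inr hy), fun j => rfl⟩
    have h₂ : SameTypeOver L Y' (fun j => g (u j)) (fun j => g (w j)) := by
      have := SameTypeOver.conj ⟨d, hdfix, hdw⟩ g
      rwa [hm] at this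
    exact h₁.symm'.trans' (htp.symm'.trans' h₂)
  have hbv : indep (Set.range fun j => b (v j)) Y' (Y ∪ Set.range w) := by
    refine indep_conj hI b fv hY' (hY.union fu) hY'ne (image_range' _ _)
      (image_of_fix fun y hy => hbfix y (Or.inr hy)) ?_ hv
    rw [Set.image_union, image_of_fix fun y hy => hbfix y (Or.inl hy), image_range']
    congr 1
    exact congrArg _ (funext hbu)
  have hgw : indep (Set.range fun j => g (w j)) Y' (Y ∪ Set.range w) := by
    have := hI.symmetry (fw.union hY) hY' fgw hY'ne hi2
    rwa [Set.union_comm (Set.range w) Y] at this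
  obtain ⟨c, hcfix, hcv⟩ :=
    hI.stationarity hY' (hY.union fw) hY'ne htp2 hbv hgw
  refine ⟨c * b, fun y hy => ?_, fun j => ?_⟩
  · rw [aut_mul_apply, hbfix y hy]
    rcases hy with hy | hy
    · exact hcfix y (Or.inr (Or.inl hy))
    · exact hcfix y (Or.inl hy)
  · have hau : (c * b) (u j) = w j := by
      rw [aut_mul_apply, hbu j]
      exact hcfix _ (Or.inr (Or.inr ⟨j, rfl⟩))
    have hav : (c * b) (v j) = g (w j) := hcv j
    show (c * b)⁻¹ (g ((c * b) (u j))) = v j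
    rw [hau, ← hav]
    exact (c * b).symm_apply_apply _

/-- Mirror middle step: if `v ⫫_{Y'} Y`, `u ⫫_Y (Y' ∪ v)` and `tp(v/Y') = g(tp(u/Y))`,
some conjugate of `g` by an element of `Fix(Y ∪ Y')` maps `u` to `v`. -/
lemma step_mid' (hI : IsLocalSIR L M indep) {g : M ≃[L] M}
    (hgm : MovesMaximallyLoc L indep g) {Y Y' : Set M}
    (hY : Y.Finite) (hY' : Y'.Finite) (hYne : Y.Nonempty) (hY'ne : Y'.Nonempty)
    (hm : g '' Y = Y') {n : ℕ} {u v : Fin n → M}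
    (hu : indep (Set.range u) Y (Y' ∪ Set.range v))
    (hv : indep (Set.range v) Y' Y)
    (htp : SameTypeOver L Y' (fun j => g (u j)) v) :
    ∃ a : M ≃[L] M, (∀ y ∈ Y ∪ Y', a y = y) ∧ ∀ j, (a⁻¹ * g * a) (u j) = v j := by
  obtain ⟨w, ⟨d, hdfix, hdw⟩, hi1, hi2⟩ := hgm Y hY hYne u
  rw [hm] at hi1 hi2
  have fu : (Set.range u).Finite := Set.finite_range _
  have fv : (Set.range v).Finite := Set.finite_range _
  have fw : (Set.range w).Finite := Set.finite_range _
  have fgw : (Set.range fun j => g (w j)).Finite := Set.finite_range _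
  have hgwY : indep (Set.range fun j => g (w j)) Y' Y := by
    refine indep_mono_right hI fgw hY' hY (fw.union hY) hY'ne Set.subset_union_right ?_
    exact hI.symmetry (fw.union hY) hY' fgw hY'ne hi2
  have htpv : SameTypeOver L Y' v (fun j => g (w j)) := by
    have h₂ : SameTypeOver L Y' (fun j => g (u j)) (fun j => g (w j)) := by
      have := SameTypeOver.conj ⟨d, hdfix, hdw⟩ g
      rwa [hm] at this
    exact htp.symm'.trans' h₂
  obtain ⟨b, hbfix, hbv⟩ := hI.stationarity hY' hY hY'ne htpv hv hgwY
  -- b fixes Y' ∪ Y and maps v to g ∘ w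
  have hub : indep (Set.range fun j => b (u j)) Y (Y' ∪ Set.range fun j => g (w j)) := by
    refine indep_conj hI b fu hY (hY'.union fv) hYne (image_range' _ _)
      (image_of_fix fun y hy => hbfix y (Or.inr hy)) ?_ hu
    rw [Set.image_union, image_of_fix fun y hy => hbfix y (Or.inl hy), image_range']
    congr 1
    exact congrArg _ (funext hbv)
  have htpw : SameTypeOver L Y (fun j => b (u j)) w := by
    have h₁ : SameTypeOver L Y (fun j => b (u j)) u := by
      refine ⟨b⁻¹, fix_inv fun y hy => hbfix y (Or.inr hy), fun j => b.symm_apply_apply _⟩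
    exact h₁.trans' ⟨d, hdfix, hdw⟩
  obtain ⟨c, hcfix, hcu⟩ :=
    hI.stationarity hY (hY'.union fgw) hYne htpw hub hi1
  refine ⟨c * b, fun y hy => ?_, fun j => ?_⟩
  · rw [aut_mul_apply, hbfix y (Or.symm hy)]
    rcases hy with hy | hy
    · exact hcfix y (Or.inl hy)
    · exact hcfix y (Or.inr (Or.inl hy))
  · have hau : (c * b) (u j) = w j := hcu j
    have hav : (c * b) (v j) = g (w j) := by
      rw [aut_mul_apply, hbv j]
      exact hcfix _ (Or.inr (Or.inr ⟨j, rfl⟩))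
    show (c * b)⁻¹ (g ((c * b) (u j))) = v j
    rw [hau, ← hav]
    exact (c * b).symm_apply_apply _

end Helpers

end TentZiegler

namespace TentZiegler

/-- Proposition 3.3: if `g₁,…,g₄` move maximally, `gᵢ(Yᵢ₋₁) = Yᵢ`,
`Y₀ ⫫_{Y₁} Y₂`, `Y₂ ⫫_{Y₃} Y₄`, and `g₄g₃g₂g₁` maps `tp(x₀/Y₀)` to `tp(x₄/Y₄)`,
then there are `aᵢ ∈ Fix(Yᵢ₋₁ ∪ Yᵢ)` with `g₄^{a₄}g₃^{a₃}g₂^{a₂}g₁^{a₁}(x₀) = x₄`. -/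
theorem vier {L : FirstOrder.Language} {M : Type*} [L.Structure M] [Countable M]
    (indep : Set M → Set M → Set M → Prop) (hindep : IsLocalSIR L M indep)
    (g : Fin 4 → M ≃[L] M) (hg : ∀ i, MovesMaximallyLoc L indep (g i))
    (Y : Fin 5 → Set M) (hfin : ∀ i, (Y i).Finite) (hne : ∀ i, (Y i).Nonempty)
    (hmap : ∀ i : Fin 4, (g i) '' Y i.castSucc = Y i.succ)
    {n : ℕ} (x₀ x₄ : Fin n → M)
    (h012 : indep (Y 0) (Y 1) (Y 2)) (h234 : indep (Y 2) (Y 3) (Y 4))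
    (htp : SameTypeOver L (Y 4) (fun j => g 3 (g 2 (g 1 (g 0 (x₀ j))))) x₄) :
    ∃ a : Fin 4 → M ≃[L] M,
      (∀ i : Fin 4, ∀ y ∈ Y i.castSucc ∪ Y i.succ, a i y = y) ∧
      ∀ j, (((a 3)⁻¹ * g 3 * a 3) * ((a 2)⁻¹ * g 2 * a 2) * ((a 1)⁻¹ * g 1 * a 1) *
        ((a 0)⁻¹ * g 0 * a 0)) (x₀ j) = x₄ j := by
  -- reduce the `Fin` numerals in `hmap`
  have hm0 : g 0 '' Y 0 = Y 1 := hmap 0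
  have hm1 : g 1 '' Y 1 = Y 2 := hmap 1
  have hm2 : g 2 '' Y 2 = Y 3 := hmap 2
  have hm3 : g 3 '' Y 3 = Y 4 := hmap 3
  -- Step 1: a₀ and x₁
  obtain ⟨a₀, x₁, ha₀fix, heq₀, hst₁, hind₁⟩ :=
    step_one hindep (hg 0) (hfin 0) (hfin 1) (hfin 2) (hne 0) (hne 1) hm0 h012 x₀
  -- Step 4: a₃ and x₃
  obtain ⟨a₃, x₃, ha₃fix, heq₃, hst₃, hind₃⟩ :=
    step_four hindep (hg 3) (hfin 2) (hfin 3) (hfin 4) (hne 3) hm3 h234 x₄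
  -- choose x₂ by existence
  obtain ⟨x₂, hst₂, hind₂⟩ :=
    hindep.existence (fun j => g 1 (x₁ j))
      (B := Y 2) (C := Y 1 ∪ Set.range x₁ ∪ (Y 3 ∪ Set.range x₃)) (hfin 2)
      (((hfin 1).union (Set.finite_range _)).union ((hfin 3).union (Set.finite_range _)))
      (hne 2)
  have fx₁ : (Set.range x₁).Finite := Set.finite_range _
  have fx₂ : (Set.range x₂).Finite := Set.finite_range _
  have fx₃ : (Set.range x₃).Finite := Set.finite_range _
  -- Step 2: a₁
  obtain ⟨a₁, ha₁fix, heq₁⟩ :=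
    step_mid hindep (hg 1) (hfin 1) (hfin 2) (hne 1) (hne 2) hm1 hind₁
      (indep_mono_right hindep fx₂ (hfin 2) ((hfin 1).union fx₁)
        (((hfin 1).union fx₁).union ((hfin 3).union fx₃)) (hne 2)
        Set.subset_union_left hind₂)
      hst₂
  -- the type of x₃ over Y 3 is that of g 2 ∘ x₂
  have hm3' : (g 3).symm '' Y 4 = Y 3 := by rw [← hm3, symm_image_image]
  have hc1 : SameTypeOver L (Y 2) (fun j => g 1 (g 0 (x₀ j))) (fun j => g 1 (x₁ j)) := by
    have := hst₁.conj (g 1)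
    rwa [hm1] at this
  have hc2 : SameTypeOver L (Y 3) (fun j => g 2 (g 1 (g 0 (x₀ j))))
      (fun j => g 2 (g 1 (x₁ j))) := by
    have := hc1.conj (g 2)
    rwa [hm2] at this
  have hc3 : SameTypeOver L (Y 3) (fun j => g 2 (g 1 (x₁ j))) (fun j => g 2 (x₂ j)) := by
    have := hst₂.conj (g 2)
    rwa [hm2] at this
  have hc5 : SameTypeOver L (Y 3) (fun j => g 2 (g 1 (g 0 (x₀ j))))
      (fun j => (g 3).symm (x₄ j)) := by
    have h := htp.conj (g 3).symm
    rw [hm3'] at h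
    refine SameTypeOver.trans' ?_ h
    refine ⟨1, fun b _ => rfl, fun j => ?_⟩
    show g 2 (g 1 (g 0 (x₀ j))) = (g 3).symm (g 3 (g 2 (g 1 (g 0 (x₀ j)))))
    exact ((g 3).symm_apply_apply _).symm
  have htp3 : SameTypeOver L (Y 3) (fun j => g 2 (x₂ j)) x₃ :=
    hc3.symm'.trans' (hc2.symm'.trans' (hc5.trans' hst₃))
  -- Step 3: a₂
  obtain ⟨a₂, ha₂fix, heq₂⟩ :=
    step_mid' hindep (hg 2) (hfin 2) (hfin 3) (hne 2) (hne 3) hm2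
      (indep_mono_right hindep fx₂ (hfin 2) ((hfin 3).union fx₃)
        (((hfin 1).union fx₁).union ((hfin 3).union fx₃)) (hne 2)
        Set.subset_union_right hind₂)
      hind₃ htp3
  -- assemble
  refine ⟨![a₀, a₁, a₂, a₃], ?_, ?_⟩
  · intro i
    fin_cases i
    · exact ha₀fix
    · exact ha₁fix
    · exact ha₂fix
    · exact ha₃fix
  · intro j
    show (a₃⁻¹ * g 3 * a₃) ((a₂⁻¹ * g 2 * a₂) ((a₁⁻¹ * g 1 * a₁)
      ((a₀⁻¹ * g 0 * a₀) (x₀ j)))) = x₄ j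
    rw [heq₀ j, heq₁ j, heq₂ j, heq₃ j]


end TentZiegler
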